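/- arXiv:1703.06463 — 3 statements merged into one kernel-verified Lean document; each statement's English description precedes it below -/
import Mathlib

section
/- Let s, n ≥ 1, let G be a real symmetric s×s matrix with λ_min(G) < 0, let M̃ be a real symmetric positive definite n×n matrix, let Ã be a real symmetric positive semidefinite n×n matrix, and let Δt ≥ 0. Then λ_min(I_s ⊗ M̃ + Δt·(G ⊗ Ã)) ≥ λ_min(M̃) + Δt · λ_min(G) · λ_max(Ã). In particular, if λ_min(M̃) + Δt · λ_min(G) · λ_max(Ã) > 0, then I_s ⊗ M̃ + Δt·(G ⊗ Ã) is symmetric positive definite. -/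
open Matrix Kronecker

/-- The smallest eigenvalue of a (symmetric) real matrix, as the infimum of its spectrum. -/
noncomputable def lamMin {m : Type*} [Fintype m] [DecidableEq m] (A : Matrix m m ℝ) : ℝ :=
  sInf (spectrum ℝ A)

/-- The largest eigenvalue of a (symmetric) real matrix, as the supremum of its spectrum. -/
noncomputable def lamMax {m : Type*} [Fintype m] [DecidableEq m] (A : Matrix m m ℝ) : ℝ :=
  sSup (spectrum ℝ A)

/-- The largest singular value of a real square matrix. -/
noncomputable def sigmaMax {m : Type*} [Fintype m] [DecidableEq m] (B : Matrix m m ℝ) : ℝ :=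
  Real.sqrt (lamMax (Bᵀ * B))

/-- `P^{-1/2}`: the inverse of the unique symmetric positive definite square root of `P`. -/
noncomputable def Matrix.PosDef.invSqrt {m : Type*} [Fintype m] [DecidableEq m]
    {P : Matrix m m ℝ} (hP : P.PosDef) : Matrix m m ℝ :=
  (hP.posSemidef.1.eigenvectorUnitary.1 *
    diagonal ((↑) ∘ (Real.sqrt ·) ∘ hP.posSemidef.1.eigenvalues) *
    (star hP.posSemidef.1.eigenvectorUnitary : Matrix m m ℝ))⁻¹

/-- The modified condition number `κ̃(B) = σ_max(B) / λ_min((B + Bᵀ)/2)`. -/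
noncomputable def ktilde {m : Type*} [Fintype m] [DecidableEq m] (B : Matrix m m ℝ) : ℝ :=
  sigmaMax B / lamMin ((1 / 2 : ℝ) • (B + Bᵀ))

/-! With `c = λ_min(M) + Δt λ_min(G) λ_max(A)`, the matrix `I ⊗ M + Δt (G ⊗ A) - c I` splits as
`I ⊗ (M - λ_min(M) I) + Δt (G - λ_min(G) I) ⊗ A + Δt (-λ_min(G)) I ⊗ (λ_max(A) I - A)`,
a nonnegative combination of Kronecker products of positive semidefinite matrices. -/

open scoped MatrixOrder

theorem Matrix.kronecker_sub {l m n p α : Type*} [NonUnitalNonAssocRing α] (A : Matrix l m α)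
    (B₁ B₂ : Matrix n p α) : A ⊗ₖ (B₁ - B₂) = A ⊗ₖ B₁ - A ⊗ₖ B₂ := by
  ext; simp [mul_sub]

theorem Matrix.sub_kronecker {l m n p α : Type*} [NonUnitalNonAssocRing α]
    (A₁ A₂ : Matrix l m α) (B : Matrix n p α) : (A₁ - A₂) ⊗ₖ B = A₁ ⊗ₖ B - A₂ ⊗ₖ B := by
  ext; simp [sub_mul]

theorem Matrix.PosDef.of_smul_one_le {m : Type*} [DecidableEq m] {S : Matrix m m ℝ} {c : ℝ}
    (hc : 0 < c) (h : c • 1 ≤ S) : S.PosDef := by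
  simpa using (PosDef.one.smul hc).add_posSemidef (le_iff.mp h)

section Spectrum

variable {m : Type*} [Fintype m] [DecidableEq m] {S : Matrix m m ℝ} {c : ℝ}

theorem lamMin_smul_one_le (hS : S.IsHermitian) : lamMin S • 1 ≤ S := by
  rw [← Algebra.algebraMap_eq_smul_one, algebraMap_le_iff_le_spectrum hS]
  exact fun _ hx => csInf_le finite_real_spectrum.bddBelow hx

theorem le_lamMax_smul_one (hS : S.IsHermitian) : S ≤ lamMax S • 1 := by
  rw [← Algebra.algebraMap_eq_smul_one, le_algebraMap_iff_spectrum_le hS]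
  exact fun _ hx => le_csSup finite_real_spectrum.bddAbove hx

theorem le_lamMin_of_smul_one_le [Nonempty m] (h : c • 1 ≤ S) : c ≤ lamMin S := by
  have hS : S.IsHermitian := by
    simpa using (le_iff.mp h).1.add (isHermitian_one.smul (IsSelfAdjoint.all c))
  rw [← Algebra.algebraMap_eq_smul_one, algebraMap_le_iff_le_spectrum hS] at h
  exact le_csInf (ContinuousFunctionalCalculus.spectrum_nonempty S hS) h

end Spectrum

theorem smul_one_le_one_kronecker_add_smul_kronecker {a b : Type*} [Fintype a] [DecidableEq a]
    [Fintype b] [DecidableEq b] {G : Matrix a a ℝ} {M A : Matrix b b ℝ} (hM : M.IsHermitian)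
    (hG : G.IsHermitian) (hGmin : lamMin G ≤ 0) (hA : A.PosSemidef) {Δt : ℝ} (hΔt : 0 ≤ Δt) :
    (lamMin M + Δt * lamMin G * lamMax A) • 1 ≤ (1 : Matrix a a ℝ) ⊗ₖ M + Δt • (G ⊗ₖ A) := by
  have hdecomp : (1 : Matrix a a ℝ) ⊗ₖ M + Δt • (G ⊗ₖ A)
        - (lamMin M + Δt * lamMin G * lamMax A) • 1
      = 1 ⊗ₖ (M - lamMin M • 1) + Δt • ((G - lamMin G • 1) ⊗ₖ A)
        + (Δt * -lamMin G) • ((1 : Matrix a a ℝ) ⊗ₖ (lamMax A • 1 - A)) := by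
    rw [kronecker_sub, sub_kronecker, kronecker_sub, kronecker_smul, smul_kronecker,
      kronecker_smul, one_kronecker_one]
    module
  have hcoeff : 0 ≤ Δt * -lamMin G := mul_nonneg hΔt (neg_nonneg.2 hGmin)
  rw [le_iff, hdecomp]
  exact ((PosSemidef.one.kronecker (le_iff.mp (lamMin_smul_one_le hM))).add
    (((le_iff.mp (lamMin_smul_one_le hG)).kronecker hA).smul hΔt)).add
    ((PosSemidef.one.kronecker (le_iff.mp (le_lamMax_smul_one hA.1))).smul hcoeff)

theorem stmt2 (s n : ℕ) (hs : 1 ≤ s) (hn : 1 ≤ n)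
    (G : Matrix (Fin s) (Fin s) ℝ) (hG : G.IsHermitian) (hGmin : lamMin G < 0)
    (Mt At : Matrix (Fin n) (Fin n) ℝ)
    (hM : Mt.PosDef) (hA : At.PosSemidef)
    (Δt : ℝ) (hΔt : 0 ≤ Δt) :
    lamMin Mt + Δt * lamMin G * lamMax At
        ≤ lamMin ((1 : Matrix (Fin s) (Fin s) ℝ) ⊗ₖ Mt + Δt • (G ⊗ₖ At)) ∧
    (0 < lamMin Mt + Δt * lamMin G * lamMax At →
      ((1 : Matrix (Fin s) (Fin s) ℝ) ⊗ₖ Mt + Δt • (G ⊗ₖ At)).PosDef) := by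
  have : Nonempty (Fin s) := ⟨⟨0, hs⟩⟩
  have : Nonempty (Fin n) := ⟨⟨0, hn⟩⟩
  have hle := smul_one_le_one_kronecker_add_smul_kronecker hM.1 hG hGmin.le hA hΔt
  exact ⟨le_lamMin_of_smul_one_le hle, fun hc => .of_smul_one_le hc hle⟩
end

section
/- Let s, n ≥ 1, let Γ be a real s×s matrix such that λ_min((Γ + Γᵀ)/2) ≥ 0, let M be a real symmetric positive definite n×n matrix, let A be a real symmetric positive semidefinite n×n matrix, let P be a real symmetric positive definite n×n matrix, and let Δt ≥ 0. Set 𝔹 = (I_s ⊗ P^{-1/2})(I_s ⊗ M + Δt·(Γ ⊗ A))(I_s ⊗ P^{-1/2}). Then the symmetric part (𝔹 + 𝔹ᵀ)/2 is positive definite and κ̃(𝔹) ≤ (λ_max(P^{-1/2} M P^{-1/2}) + Δt · σ_max(Γ) · λ_max(P^{-1/2} A P^{-1/2})) / (λ_min(P^{-1/2} M P^{-1/2}) + Δt · λ_min((Γ + Γᵀ)/2) · λ_min(P^{-1/2} A P^{-1/2})). -/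
open Matrix Kronecker

/-!
Conjugating by `I_s ⊗ P^{-1/2}` turns `𝔹` into `I_s ⊗ M̃ + Δt • (Γ ⊗ Ã)` with
`M̃ = P^{-1/2} M P^{-1/2}` and `Ã = P^{-1/2} A P^{-1/2}`. The Kronecker product of positive
semidefinite matrices is monotone in each factor for the Loewner order; as
`Γₛ = (Γ + Γᵀ)/2 ⪰ λ_min Γₛ • I ⪰ 0`, the symmetric part `I_s ⊗ M̃ + Δt • (Γₛ ⊗ Ã)` dominates `(λ_min M̃ + Δt λ_min Γₛ λ_min Ã) • I`, which bounds the
denominator of `κ̃(𝔹)` from below. For the numerator, `σ_max` is the spectral norm, which is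
subadditive, submultiplicative on Kronecker products, and equal to `λ_max` on positive
semidefinite matrices.
-/

open scoped MatrixOrder Matrix.Norms.L2Operator

namespace Matrix

lemma smul_one_kronecker_smul_one {l m : Type*} [DecidableEq l] [DecidableEq m] (a b : ℝ) :
    (a • 1 : Matrix l l ℝ) ⊗ₖ (b • 1 : Matrix m m ℝ) = (a * b) • 1 := by
  rw [smul_kronecker, kronecker_smul, one_kronecker_one, smul_smul]

variable {l m : Type*} [Fintype l] [Fintype m]

lemma kronecker_le_kronecker_left {X₁ X₂ : Matrix l l ℝ} {Y : Matrix m m ℝ} (hX : X₁ ≤ X₂)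
    (hY : 0 ≤ Y) : X₁ ⊗ₖ Y ≤ X₂ ⊗ₖ Y := by
  have hD : 0 ≤ (X₂ - X₁) ⊗ₖ Y := nonneg_iff_posSemidef.2 <|
    (nonneg_iff_posSemidef.1 (sub_nonneg.2 hX)).kronecker (nonneg_iff_posSemidef.1 hY)
  calc X₁ ⊗ₖ Y ≤ X₁ ⊗ₖ Y + (X₂ - X₁) ⊗ₖ Y := le_add_of_nonneg_right hD
    _ = X₂ ⊗ₖ Y := by rw [← add_kronecker, add_sub_cancel]

lemma kronecker_le_kronecker_right {X : Matrix l l ℝ} {Y₁ Y₂ : Matrix m m ℝ} (hX : 0 ≤ X)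
    (hY : Y₁ ≤ Y₂) : X ⊗ₖ Y₁ ≤ X ⊗ₖ Y₂ := by
  have hD : 0 ≤ X ⊗ₖ (Y₂ - Y₁) := nonneg_iff_posSemidef.2 <|
    (nonneg_iff_posSemidef.1 hX).kronecker (nonneg_iff_posSemidef.1 (sub_nonneg.2 hY))
  calc X ⊗ₖ Y₁ ≤ X ⊗ₖ Y₁ + X ⊗ₖ (Y₂ - Y₁) := le_add_of_nonneg_right hD
    _ = X ⊗ₖ Y₂ := by rw [← kronecker_add, add_sub_cancel]

variable [DecidableEq l] [DecidableEq m]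

lemma kronecker_le_smul_one {X : Matrix l l ℝ} {Y : Matrix m m ℝ} {a b : ℝ} (hX₀ : 0 ≤ X)
    (hX : X ≤ a • 1) (hY₀ : 0 ≤ Y) (hY : Y ≤ b • 1) : X ⊗ₖ Y ≤ (a * b) • 1 :=
  calc X ⊗ₖ Y ≤ (a • 1) ⊗ₖ Y := kronecker_le_kronecker_left hX hY₀
    _ ≤ (a • 1) ⊗ₖ (b • 1) := kronecker_le_kronecker_right (hX₀.trans hX) hY
    _ = (a * b) • 1 := smul_one_kronecker_smul_one a b

lemma smul_one_le_kronecker {X : Matrix l l ℝ} {Y : Matrix m m ℝ} {a b : ℝ} (ha : 0 ≤ a)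
    (hX : a • 1 ≤ X) (hY₀ : 0 ≤ Y) (hY : b • 1 ≤ Y) : (a * b) • 1 ≤ X ⊗ₖ Y :=
  calc (a * b) • 1 = (a • 1 : Matrix l l ℝ) ⊗ₖ (b • 1) := (smul_one_kronecker_smul_one a b).symm
    _ ≤ (a • 1) ⊗ₖ Y := kronecker_le_kronecker_right (PosSemidef.one.smul ha).nonneg hY
    _ ≤ X ⊗ₖ Y := kronecker_le_kronecker_left hX hY₀

lemma IsHermitian.le_norm_smul_one {X : Matrix m m ℝ} (hX : X.IsHermitian) :
    X ≤ ‖X‖ • 1 := by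
  rw [← Algebra.algebraMap_eq_smul_one, le_algebraMap_iff_spectrum_le hX.isSelfAdjoint]
  exact fun x hx => (le_abs_self x).trans <|
    IsometricContinuousFunctionalCalculus.norm_spectrum_le X hx hX.isSelfAdjoint

lemma norm_le_of_nonneg_of_le_smul_one {X : Matrix m m ℝ} {r : ℝ} (hr : 0 ≤ r) (hX₀ : 0 ≤ X)
    (hX : X ≤ r • 1) : ‖X‖ ≤ r := by
  rw [← Algebra.algebraMap_eq_smul_one, le_algebraMap_iff_spectrum_le] at hX
  have := (norm_cfc_le_iff (id : ℝ → ℝ) X hr).2 fun x hx =>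
    abs_le.2 ⟨(neg_nonpos.2 hr).trans (spectrum_nonneg_of_nonneg hX₀ hx), hX x hx⟩
  rwa [cfc_id ℝ X] at this

/-- The C⋆-identity `‖Z‖² = ‖Zᴴ * Z‖` reduces the bound to positive semidefinite factors. -/
lemma norm_kronecker_le (X : Matrix l l ℝ) (Y : Matrix m m ℝ) : ‖X ⊗ₖ Y‖ ≤ ‖X‖ * ‖Y‖ := by
  have hXX := posSemidef_conjTranspose_mul_self X
  have hYY := posSemidef_conjTranspose_mul_self Y
  have hsq : ‖(Xᴴ * X) ⊗ₖ (Yᴴ * Y)‖ ≤ ‖Xᴴ * X‖ * ‖Yᴴ * Y‖ :=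
    norm_le_of_nonneg_of_le_smul_one (by positivity) (hXX.kronecker hYY).nonneg <|
      kronecker_le_smul_one hXX.nonneg hXX.1.le_norm_smul_one hYY.nonneg hYY.1.le_norm_smul_one
  rw [mul_kronecker_mul, ← conjTranspose_kronecker, l2_opNorm_conjTranspose_mul_self,
    l2_opNorm_conjTranspose_mul_self, l2_opNorm_conjTranspose_mul_self, mul_mul_mul_comm] at hsq
  exact (mul_self_le_mul_self_iff (norm_nonneg _) (by positivity)).2 hsq

lemma PosDef.mul_mul_self_of_posDef {M Q : Matrix m m ℝ} (hM : M.PosDef) (hQ : Q.PosDef) :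
    (Q * M * Q).PosDef := by
  simpa only [hQ.1.eq] using
    hM.conjTranspose_mul_mul_same (mulVec_injective_iff_isUnit.2 hQ.isUnit)

lemma PosDef.invSqrt_eq_inv_sqrt {P : Matrix m m ℝ} (hP : P.PosDef) :
    hP.invSqrt = (CFC.sqrt P)⁻¹ := by
  rw [CFC.sqrt_eq_real_sqrt P hP.posSemidef.nonneg, cfcₙ_eq_cfc, hP.posSemidef.1.cfc_eq]
  rfl

lemma PosDef.posDef_invSqrt {P : Matrix m m ℝ} (hP : P.PosDef) : hP.invSqrt.PosDef :=
  hP.invSqrt_eq_inv_sqrt ▸ hP.isStrictlyPositive.sqrt.posDef.inv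

end Matrix

open Matrix

section Spectrum

variable {m : Type*} [Fintype m] [DecidableEq m]

lemma le_lamMin_iff [Nonempty m] {X : Matrix m m ℝ} (hX : X.IsHermitian) {c : ℝ} :
    c ≤ lamMin X ↔ c • 1 ≤ X := by
  rw [lamMin, le_csInf_iff X.finite_spectrum.bddBelow
      (ContinuousFunctionalCalculus.spectrum_nonempty X hX.isSelfAdjoint),
    ← Algebra.algebraMap_eq_smul_one, algebraMap_le_iff_le_spectrum hX.isSelfAdjoint]

lemma lamMax_le_iff [Nonempty m] {X : Matrix m m ℝ} (hX : X.IsHermitian) {c : ℝ} :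
    lamMax X ≤ c ↔ X ≤ c • 1 := by
  rw [lamMax, csSup_le_iff X.finite_spectrum.bddAbove
      (ContinuousFunctionalCalculus.spectrum_nonempty X hX.isSelfAdjoint),
    ← Algebra.algebraMap_eq_smul_one, le_algebraMap_iff_spectrum_le hX.isSelfAdjoint]

lemma lamMin_pos [Nonempty m] {X : Matrix m m ℝ} (hX : X.PosDef) : 0 < lamMin X := by
  obtain ⟨i, hi⟩ : lamMin X ∈ Set.range hX.1.eigenvalues :=
    hX.1.spectrum_real_eq_range_eigenvalues ▸
      (ContinuousFunctionalCalculus.spectrum_nonempty X hX.1.isSelfAdjoint).csInf_mem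
        X.finite_spectrum
  exact hi ▸ hX.eigenvalues_pos i

lemma lamMin_nonneg {X : Matrix m m ℝ} (hX : X.PosSemidef) : 0 ≤ lamMin X :=
  Real.sInf_nonneg fun _ hx => spectrum_nonneg_of_nonneg hX.nonneg hx

lemma lamMax_nonneg {X : Matrix m m ℝ} (hX : X.PosSemidef) : 0 ≤ lamMax X :=
  Real.sSup_nonneg fun _ hx => spectrum_nonneg_of_nonneg hX.nonneg hx

lemma Matrix.PosSemidef.norm_eq_lamMax [Nonempty m] {X : Matrix m m ℝ} (hX : X.PosSemidef) :
    ‖X‖ = lamMax X :=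
  le_antisymm
    (norm_le_of_nonneg_of_le_smul_one (lamMax_nonneg hX) hX.nonneg
      ((lamMax_le_iff hX.1).1 le_rfl))
    ((lamMax_le_iff hX.1).2 hX.1.le_norm_smul_one)

lemma sigmaMax_eq_norm [Nonempty m] (B : Matrix m m ℝ) : sigmaMax B = ‖B‖ := by
  rw [sigmaMax, ← conjTranspose_eq_transpose_of_trivial,
    ← (posSemidef_conjTranspose_mul_self B).norm_eq_lamMax, l2_opNorm_conjTranspose_mul_self,
    Real.sqrt_mul_self (norm_nonneg B)]

lemma sigmaMax_nonneg (B : Matrix m m ℝ) : 0 ≤ sigmaMax B :=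
  Real.sqrt_nonneg _

end Spectrum

section Kronecker

variable {l m : Type*} [Fintype l] [Fintype m] [DecidableEq l] [DecidableEq m]
  [Nonempty l] [Nonempty m]

lemma smul_one_le_half_smul_add_transpose {Γ : Matrix l l ℝ}
    (hΓ : 0 ≤ lamMin ((1 / 2 : ℝ) • (Γ + Γᵀ))) {M A : Matrix m m ℝ} (hM : M.IsHermitian)
    (hA : A.PosSemidef) {Δt : ℝ} (hΔt : 0 ≤ Δt) {B : Matrix (l × m) (l × m) ℝ}
    (hB : B = (1 : Matrix l l ℝ) ⊗ₖ M + Δt • (Γ ⊗ₖ A)) :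
    (lamMin M + Δt * lamMin ((1 / 2 : ℝ) • (Γ + Γᵀ)) * lamMin A) • 1 ≤
      (1 / 2 : ℝ) • (B + Bᵀ) := by
  set Γs := (1 / 2 : ℝ) • (Γ + Γᵀ)
  have hΓs : Γs.IsHermitian := by
    simp only [Γs, IsHermitian, conjTranspose_eq_transpose_of_trivial, transpose_smul,
      transpose_add, transpose_transpose, add_comm]
  have hsymm : (1 / 2 : ℝ) • (B + Bᵀ) = (1 : Matrix l l ℝ) ⊗ₖ M + Δt • (Γs ⊗ₖ A) := by
    rw [hB, transpose_add, transpose_smul, ← kroneckerMap_transpose, ← kroneckerMap_transpose,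
      transpose_one, ← conjTranspose_eq_transpose_of_trivial M, hM.eq,
      ← conjTranspose_eq_transpose_of_trivial A, hA.1.eq, smul_kronecker, add_kronecker]
    module
  have hMlow : lamMin M • (1 : Matrix (l × m) (l × m) ℝ) ≤ (1 : Matrix l l ℝ) ⊗ₖ M := by
    simpa [kronecker_smul] using
      kronecker_le_kronecker_right PosSemidef.one.nonneg ((le_lamMin_iff hM).1 le_rfl)
  have hΓAlow : (lamMin Γs * lamMin A) • 1 ≤ Γs ⊗ₖ A :=
    smul_one_le_kronecker hΓ ((le_lamMin_iff hΓs).1 le_rfl) hA.nonneg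
      ((le_lamMin_iff hA.1).1 le_rfl)
  calc (lamMin M + Δt * lamMin Γs * lamMin A) • (1 : Matrix (l × m) (l × m) ℝ)
      = lamMin M • 1 + Δt • ((lamMin Γs * lamMin A) • 1) := by module
    _ ≤ (1 : Matrix l l ℝ) ⊗ₖ M + Δt • (Γs ⊗ₖ A) :=
      add_le_add hMlow (smul_le_smul_of_nonneg_left hΓAlow hΔt)
    _ = (1 / 2 : ℝ) • (B + Bᵀ) := hsymm.symm

lemma sigmaMax_one_kronecker_add_smul_kronecker_le (Γ : Matrix l l ℝ) {M A : Matrix m m ℝ}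
    (hM : M.PosSemidef) (hA : A.PosSemidef) {Δt : ℝ} (hΔt : 0 ≤ Δt) :
    sigmaMax ((1 : Matrix l l ℝ) ⊗ₖ M + Δt • (Γ ⊗ₖ A)) ≤
      lamMax M + Δt * sigmaMax Γ * lamMax A :=
  calc sigmaMax ((1 : Matrix l l ℝ) ⊗ₖ M + Δt • (Γ ⊗ₖ A))
      ≤ ‖(1 : Matrix l l ℝ) ⊗ₖ M‖ + ‖Δt • (Γ ⊗ₖ A)‖ :=
        (sigmaMax_eq_norm _).trans_le (norm_add_le _ _)
    _ ≤ ‖(1 : Matrix l l ℝ)‖ * ‖M‖ + Δt * (‖Γ‖ * ‖A‖) := by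
      rw [norm_smul, Real.norm_of_nonneg hΔt]
      gcongr <;> exact norm_kronecker_le _ _
    _ = lamMax M + Δt * sigmaMax Γ * lamMax A := by
      rw [norm_one, hM.norm_eq_lamMax, hA.norm_eq_lamMax, sigmaMax_eq_norm]
      ring

theorem posDef_half_smul_add_transpose_and_ktilde_le {Γ : Matrix l l ℝ}
    (hΓ : 0 ≤ lamMin ((1 / 2 : ℝ) • (Γ + Γᵀ))) {M A : Matrix m m ℝ} (hM : M.PosDef)
    (hA : A.PosSemidef) {Δt : ℝ} (hΔt : 0 ≤ Δt) {B : Matrix (l × m) (l × m) ℝ}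
    (hB : B = (1 : Matrix l l ℝ) ⊗ₖ M + Δt • (Γ ⊗ₖ A)) :
    ((1 / 2 : ℝ) • (B + Bᵀ)).PosDef ∧
      ktilde B ≤ (lamMax M + Δt * sigmaMax Γ * lamMax A) /
        (lamMin M + Δt * lamMin ((1 / 2 : ℝ) • (Γ + Γᵀ)) * lamMin A) := by
  have hlow := smul_one_le_half_smul_add_transpose hΓ hM.1 hA hΔt hB
  have hden : 0 < lamMin M + Δt * lamMin ((1 / 2 : ℝ) • (Γ + Γᵀ)) * lamMin A := by
    have := lamMin_pos hM
    have := lamMin_nonneg hA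
    positivity
  have hnum : 0 ≤ lamMax M + Δt * sigmaMax Γ * lamMax A := by
    have := lamMax_nonneg hM.posSemidef
    have := lamMax_nonneg hA
    have := sigmaMax_nonneg Γ
    positivity
  have hS : ((1 / 2 : ℝ) • (B + Bᵀ)).PosDef := by
    have := (PosDef.one.smul hden).add_posSemidef (nonneg_iff_posSemidef.1 (sub_nonneg.2 hlow))
    rwa [add_sub_cancel] at this
  refine ⟨hS, div_le_div₀ hnum ?_ hden ((le_lamMin_iff hS.1).2 hlow)⟩
  exact hB ▸ sigmaMax_one_kronecker_add_smul_kronecker_le Γ hM.posSemidef hA hΔt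

end Kronecker

theorem stmt3 (s n : ℕ) (hs : 1 ≤ s) (hn : 1 ≤ n)
    (Γ : Matrix (Fin s) (Fin s) ℝ) (hΓ : 0 ≤ lamMin ((1 / 2 : ℝ) • (Γ + Γᵀ)))
    (M A P : Matrix (Fin n) (Fin n) ℝ)
    (hM : M.PosDef) (hA : A.PosSemidef) (hP : P.PosDef)
    (Δt : ℝ) (hΔt : 0 ≤ Δt)
    (B : Matrix (Fin s × Fin n) (Fin s × Fin n) ℝ)
    (hB : B = ((1 : Matrix (Fin s) (Fin s) ℝ) ⊗ₖ hP.invSqrt) *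
        ((1 : Matrix (Fin s) (Fin s) ℝ) ⊗ₖ M + Δt • (Γ ⊗ₖ A)) *
        ((1 : Matrix (Fin s) (Fin s) ℝ) ⊗ₖ hP.invSqrt)) :
    ((1 / 2 : ℝ) • (B + Bᵀ)).PosDef ∧
    ktilde B ≤
      (lamMax (hP.invSqrt * M * hP.invSqrt)
          + Δt * sigmaMax Γ * lamMax (hP.invSqrt * A * hP.invSqrt)) /
      (lamMin (hP.invSqrt * M * hP.invSqrt)
          + Δt * lamMin ((1 / 2 : ℝ) • (Γ + Γᵀ)) * lamMin (hP.invSqrt * A * hP.invSqrt)) := by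
  have : Nonempty (Fin s) := Fin.pos_iff_nonempty.1 hs
  have : Nonempty (Fin n) := Fin.pos_iff_nonempty.1 hn
  have hQ := hP.posDef_invSqrt
  have hA' : (hP.invSqrt * A * hP.invSqrt).PosSemidef := by
    simpa only [hQ.1.eq] using hA.conjTranspose_mul_mul_same hP.invSqrt
  refine posDef_half_smul_add_transpose_and_ktilde_le hΓ (hM.mul_mul_self_of_posDef hQ) hA' hΔt ?_
  rw [hB, Matrix.mul_add, Matrix.add_mul, Matrix.mul_smul, Matrix.smul_mul]
  simp only [← mul_kronecker_mul, Matrix.one_mul, Matrix.mul_one]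
end

section
/- Let I be a nonempty finite index set, let w_i ≥ 0 be nonnegative weights not all zero, and let x_i > 0 be positive reals for i ∈ I. Set S = Σ_i w_i·x_i, assume S > 0, and set ψ = (max_i x_i)/S. Then the infimum over q ∈ (2, ∞) of q·(Σ_i w_i·x_i^{q/(q−2)})^{(q−2)/q} is at most 2e·(1 + |ln ψ|)·S. -/
/-!
Take the single exponent `q = 3 + 2 |ln ψ|`. With `p = q/(q-2)` and `M = max_i x_i`, the bound
`x_i^p ≤ M^(p-1) x_i` gives `(Σ w_i x_i^p)^(1/p) ≤ M^(2/q) S^(1-2/q) = ψ^(2/q) S ≤ e^(2|ln ψ|/q) S`,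
and `q e^(2|ln ψ|/q) ≤ 2e(1 + |ln ψ|)` follows from `e^(3/q) ≥ 1 + 3/q`.
-/

open BigOperators

open Real Finset

theorem sum_mul_rpow_le_rpow_mul_sum {ι : Type*} (s : Finset ι) {w x : ι → ℝ} {M p : ℝ}
    (hw : ∀ i ∈ s, 0 ≤ w i) (hx : ∀ i ∈ s, 0 ≤ x i) (hxM : ∀ i ∈ s, x i ≤ M) (hp : 1 ≤ p) :
    ∑ i ∈ s, w i * x i ^ p ≤ M ^ (p - 1) * ∑ i ∈ s, w i * x i := by
  rw [mul_sum]
  refine sum_le_sum fun i hi => ?_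
  have hsplit : x i ^ p = x i * x i ^ (p - 1) := by
    rw [← rpow_one_add' (hx i hi) (by linarith), add_sub_cancel]
  have hpow : x i ^ (p - 1) ≤ M ^ (p - 1) := rpow_le_rpow (hx i hi) (hxM i hi) (sub_nonneg.2 hp)
  have hwx : 0 ≤ w i * x i := mul_nonneg (hw i hi) (hx i hi)
  rw [hsplit]
  nlinarith

theorem rpow_sum_mul_rpow_le {ι : Type*} (s : Finset ι) {w x : ι → ℝ} {M p : ℝ}
    (hw : ∀ i ∈ s, 0 ≤ w i) (hx : ∀ i ∈ s, 0 ≤ x i) (hxM : ∀ i ∈ s, x i ≤ M) (hM : 0 ≤ M)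
    (hp : 1 ≤ p) :
    (∑ i ∈ s, w i * x i ^ p) ^ (1 / p) ≤
      M ^ (1 - 1 / p) * (∑ i ∈ s, w i * x i) ^ (1 / p) := by
  have hp0 : 0 < p := by linarith
  calc (∑ i ∈ s, w i * x i ^ p) ^ (1 / p)
      ≤ (M ^ (p - 1) * ∑ i ∈ s, w i * x i) ^ (1 / p) :=
        rpow_le_rpow (sum_nonneg fun i hi => mul_nonneg (hw i hi) (rpow_nonneg (hx i hi) _))
          (sum_mul_rpow_le_rpow_mul_sum s hw hx hxM hp) (by positivity)
    _ = M ^ (1 - 1 / p) * (∑ i ∈ s, w i * x i) ^ (1 / p) := by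
        rw [mul_rpow (rpow_nonneg hM _) (sum_nonneg fun i hi => mul_nonneg (hw i hi) (hx i hi)),
          ← rpow_mul hM]
        congr 2
        field_simp

theorem mul_rpow_one_sub_mul_rpow {ψ S : ℝ} (hψ : 0 ≤ ψ) (hS : 0 < S) (t : ℝ) :
    (ψ * S) ^ (1 - t) * S ^ t = ψ ^ (1 - t) * S := by
  rw [mul_rpow hψ hS.le, mul_assoc, ← rpow_add hS, sub_add_cancel, rpow_one]

theorem rpow_le_exp_abs_log_mul {ψ t : ℝ} (hψ : 0 ≤ ψ) (ht : 0 ≤ t) :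
    ψ ^ t ≤ exp (|log ψ| * t) := by
  rcases hψ.eq_or_lt with rfl | hψ
  · simpa using zero_rpow_le_one t
  · rw [rpow_def_of_pos hψ]
    gcongr
    exact le_abs_self _

theorem mul_exp_mul_two_div_le {a : ℝ} (ha : 0 ≤ a) :
    (3 + 2 * a) * exp (a * (2 / (3 + 2 * a))) ≤ 2 * exp 1 * (1 + a) := by
  set q := 3 + 2 * a
  have hq0 : 0 < q := by positivity
  have hsplit : exp (a * (2 / q)) = exp 1 / exp (3 / q) := by
    rw [← exp_sub]; congr 1; field_simp; ring
  have hlow : q + 3 ≤ q * exp (3 / q) := by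
    calc q + 3 = q * (3 / q + 1) := by field_simp; ring
      _ ≤ q * exp (3 / q) := by gcongr; exact add_one_le_exp _
  rw [hsplit, ← mul_div_assoc, div_le_iff₀ (exp_pos _)]
  refine le_of_mul_le_mul_left ?_ hq0
  calc q * (q * exp 1) ≤ 2 * exp 1 * (1 + a) * (q + 3) := by nlinarith [exp_pos 1]
    _ ≤ 2 * exp 1 * (1 + a) * (q * exp (3 / q)) := by gcongr
    _ = q * (2 * exp 1 * (1 + a) * exp (3 / q)) := by ring

theorem stmt14_general {ι : Type*} [Fintype ι] (w x : ι → ℝ)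
    (hw : ∀ i, 0 ≤ w i) (hx : ∀ i, 0 < x i)
    (S : ℝ) (hS : S = ∑ i, w i * x i) (hSpos : 0 < S)
    (ψ : ℝ) (hψ : ψ = (⨆ i, x i) / S) :
    sInf ((fun q : ℝ => q * (∑ i, w i * x i ^ (q / (q - 2))) ^ ((q - 2) / q)) '' Set.Ioi 2)
      ≤ 2 * Real.exp 1 * (1 + |Real.log ψ|) * S := by
  set F := fun q : ℝ => q * (∑ i, w i * x i ^ (q / (q - 2))) ^ ((q - 2) / q)
  set a := |log ψ|
  set q := 3 + 2 * a
  have hq : 2 < q := by linarith [abs_nonneg (log ψ)]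
  have hM : 0 ≤ ⨆ i, x i := Real.iSup_nonneg fun i => (hx i).le
  have hψ0 : 0 ≤ ψ := hψ ▸ div_nonneg hM hSpos.le
  have hψS : (⨆ i, x i) = ψ * S := by rw [hψ, div_mul_cancel₀ _ hSpos.ne']
  have hexp : 1 / (q / (q - 2)) = (q - 2) / q ∧ 1 - (q - 2) / q = 2 / q := by
    refine ⟨by field_simp, by field_simp; ring⟩
  have hF_nonneg : ∀ r ∈ F '' Set.Ioi 2, 0 ≤ r := by
    rintro _ ⟨r, hr, rfl⟩
    have : (0 : ℝ) < r := lt_trans two_pos hr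
    have : 0 ≤ ∑ i, w i * x i ^ (r / (r - 2)) :=
      sum_nonneg fun i _ => mul_nonneg (hw i) (rpow_nonneg (hx i).le _)
    positivity
  calc sInf (F '' Set.Ioi 2) ≤ F q := csInf_le ⟨0, hF_nonneg⟩ (Set.mem_image_of_mem F hq)
    _ ≤ q * ((ψ * S) ^ (2 / q) * S ^ ((q - 2) / q)) := by
        dsimp only [F]
        gcongr
        rw [← hψS, hS, ← hexp.2, ← hexp.1]
        refine rpow_sum_mul_rpow_le univ (fun i _ => hw i) (fun i _ => (hx i).le)
          (fun i _ => le_ciSup (Set.finite_range x).bddAbove i) hM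
          ((one_le_div (by linarith)).2 (by linarith))
    _ = q * ψ ^ (2 / q) * S := by
        rw [← hexp.2, mul_rpow_one_sub_mul_rpow hψ0 hSpos, mul_assoc]
    _ ≤ q * exp (a * (2 / q)) * S := by
        gcongr
        exact rpow_le_exp_abs_log_mul hψ0 (by positivity)
    _ ≤ 2 * exp 1 * (1 + a) * S :=
        mul_le_mul_of_nonneg_right (mul_exp_mul_two_div_le (abs_nonneg _)) hSpos.le

theorem stmt14 {ι : Type*} [Fintype ι] [Nonempty ι] (w x : ι → ℝ)
    (hw : ∀ i, 0 ≤ w i) (hw' : ∃ i, w i ≠ 0) (hx : ∀ i, 0 < x i)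
    (S : ℝ) (hS : S = ∑ i, w i * x i) (hSpos : 0 < S)
    (ψ : ℝ) (hψ : ψ = (⨆ i, x i) / S) :
    sInf ((fun q : ℝ => q * (∑ i, w i * x i ^ (q / (q - 2))) ^ ((q - 2) / q)) '' Set.Ioi 2)
      ≤ 2 * Real.exp 1 * (1 + |Real.log ψ|) * S :=
  stmt14_general w x hw hx S hS hSpos ψ hψ
end
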